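/- (Proposition 5 combined with Theorem 4: Gaussian-mixture Fokker–Planck drift in closed form.) Let n, k ≥ 1 and ν ∈ Δ_k. Let a : ℝⁿ → ℝ^{n×n} be twice continuously differentiable. For each ℓ = 1,…,k let η^ℓ : ℝ → ℝⁿ and θ^ℓ : ℝ → ℝ^{n×n} with θ^ℓ_t symmetric negative definite for all t, and assume both are differentiable at t₀ with derivatives η̇^ℓ, θ̇^ℓ. Define ψ(η,θ) := −(1/4)ηᵀθ⁻¹η + (1/2)·log det(−(1/2)θ⁻¹) + (n/2)·log(2π), set p_ℓ(y,t) := exp( (η^ℓ_t)ᵀy + yᵀθ^ℓ_t y − ψ(η^ℓ_t, θ^ℓ_t) ) and p(y,t) := ∑_{ℓ=1}^k ν_ℓ p_ℓ(y,t). Define the drift u(y) := (1/2)·div a(y) + (1/p(y,t₀))·∑_{ℓ=1}^k ν_ℓ p_ℓ(y,t₀)·[ (1/4)(θ^ℓ)⁻¹θ̇^ℓ(θ^ℓ)⁻¹η^ℓ − (1/2)(θ^ℓ)⁻¹η̇^ℓ − (1/2)(θ^ℓ)⁻¹θ̇^ℓ y + a(y)( (1/2)η^ℓ + θ^ℓ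 y ) ], with all parameters evaluated at t₀. Then for every x ∈ ℝⁿ, p satisfies the Kolmogorov forward equation at (x,t₀): ∂_t p(x,t₀) = −∑_{i=1}^n ∂_{x_i}( u_i · p(·,t₀) )(x) + (1/2)·∑_{i,j=1}^n ∂_{x_i}∂_{x_j}( a_{ij} · p(·,t₀) )(x). -/

import Mathlib

/-! Each Gaussian component `p_ℓ` solves the continuity equation `∂ₜ p_ℓ = -div (p_ℓ c_ℓ)` for
the affine velocity field `c_ℓ(y) = ¼ θ⁻¹θ̇θ⁻¹η - ½ θ⁻¹η̇ - ½ θ⁻¹θ̇ y`: after dividing by `p_ℓ`, both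
sides are quadratic polynomials in `y`, and they agree once `∂ₜ ψ` is computed from
`d/dt θ⁻¹ = -θ⁻¹θ̇θ⁻¹` and Jacobi's formula `d/dt log det M = tr (M⁻¹ Ṁ)`. Summing over `ℓ` gives
`∂ₜ p = -div g` with `g = ∑ ν_ℓ p_ℓ c_ℓ`. The remaining part `a (½η + θy) = ½ a ∇ log p_ℓ` of the
drift is chosen so that `u p = ½ div (a p) + g`; hence the diffusion term of the Fokker–Planck
operator cancels and its right-hand side reduces to `-div g`. -/

open Matrix MeasureTheory

/-- Partial derivative in the `i`-th coordinate direction, defined as the derivative of the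
one-variable slice `ξ ↦ F (x with i-th coordinate replaced by ξ)`. -/
noncomputable def pderivCoord {n : ℕ} (i : Fin n) (F : (Fin n → ℝ) → ℝ)
    (y : Fin n → ℝ) : ℝ :=
  deriv (fun ξ : ℝ => F (Function.update y i ξ)) (y i)

open Topology

section PartialDerivatives

variable {n : ℕ} {F G : (Fin n → ℝ) → ℝ} {y : Fin n → ℝ}

theorem HasFDerivAt.hasDerivAt_update {L : (Fin n → ℝ) →L[ℝ] ℝ} (h : HasFDerivAt F L y)
    (i : Fin n) : HasDerivAt (fun ξ => F (Function.update y i ξ)) (L (Pi.single i 1)) (y i) := by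
  have h' : HasFDerivAt F L (Function.update y i (y i)) := by rwa [Function.update_eq_self]
  exact h'.comp_hasDerivAt (y i) (_root_.hasDerivAt_update y i (y i))

theorem DifferentiableAt.pderivCoord_eq_fderiv (h : DifferentiableAt ℝ F y) (i : Fin n) :
    pderivCoord i F y = fderiv ℝ F y (Pi.single i 1) :=
  (h.hasFDerivAt.hasDerivAt_update i).deriv

theorem pderivCoord_add (i : Fin n) (hF : DifferentiableAt ℝ F y) (hG : DifferentiableAt ℝ G y) :
    pderivCoord i (fun z => F z + G z) y = pderivCoord i F y + pderivCoord i G y := by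
  rw [(hF.fun_add hG).pderivCoord_eq_fderiv, hF.pderivCoord_eq_fderiv, hG.pderivCoord_eq_fderiv,
    fderiv_fun_add hF hG, _root_.add_apply]

theorem pderivCoord_mul (i : Fin n) (hF : DifferentiableAt ℝ F y) (hG : DifferentiableAt ℝ G y) :
    pderivCoord i (fun z => F z * G z) y = pderivCoord i F y * G y + F y * pderivCoord i G y := by
  rw [(hF.fun_mul hG).pderivCoord_eq_fderiv, hF.pderivCoord_eq_fderiv, hG.pderivCoord_eq_fderiv,
    fderiv_fun_mul hF hG]
  simp only [_root_.add_apply, _root_.smul_apply, smul_eq_mul]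
  ring

theorem pderivCoord_const_mul (i : Fin n) (c : ℝ) (hF : DifferentiableAt ℝ F y) :
    pderivCoord i (fun z => c * F z) y = c * pderivCoord i F y := by
  rw [(hF.const_mul c).pderivCoord_eq_fderiv, hF.pderivCoord_eq_fderiv, fderiv_const_mul hF]
  rfl

theorem pderivCoord_sum {ι : Type*} (s : Finset ι) (i : Fin n) {f : ι → (Fin n → ℝ) → ℝ}
    (hf : ∀ ℓ ∈ s, DifferentiableAt ℝ (f ℓ) y) :
    pderivCoord i (fun z => ∑ ℓ ∈ s, f ℓ z) y = ∑ ℓ ∈ s, pderivCoord i (f ℓ) y := by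
  rw [(DifferentiableAt.fun_sum hf).pderivCoord_eq_fderiv, fderiv_fun_sum hf,
    _root_.sum_apply]
  exact Finset.sum_congr rfl fun ℓ hℓ => ((hf ℓ hℓ).pderivCoord_eq_fderiv i).symm

theorem ContDiff.differentiable_pderivCoord (hF : ContDiff ℝ 2 F) (j : Fin n) :
    Differentiable ℝ (pderivCoord j F) := by
  have hF' : pderivCoord j F = fun y => fderiv ℝ F y (Pi.single j 1) :=
    funext fun y => (hF.differentiable (by norm_num) y).pderivCoord_eq_fderiv j
  rw [hF']
  exact ((hF.fderiv_right (m := 1) (by norm_num)).differentiable one_ne_zero).clm_apply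
    (differentiable_const _)

end PartialDerivatives

section Paths

variable {ι κ : Type*} [Fintype ι] {t₀ : ℝ}

theorem HasDerivAt.dotProduct {f g : ℝ → ι → ℝ} {f' g' : ι → ℝ} (hf : HasDerivAt f f' t₀)
    (hg : HasDerivAt g g' t₀) :
    HasDerivAt (fun t => f t ⬝ᵥ g t) (f' ⬝ᵥ g t₀ + f t₀ ⬝ᵥ g') t₀ := by
  show HasDerivAt (fun t => ∑ i, f t i * g t i) (∑ i, f' i * g t₀ i + ∑ i, f t₀ i * g' i) t₀
  rw [← Finset.sum_add_distrib]
  exact HasDerivAt.fun_sum fun i _ => (hasDerivAt_pi.1 hf i).mul (hasDerivAt_pi.1 hg i)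

theorem HasDerivAt.mulVec {A : ℝ → Matrix κ ι ℝ} {A' : Matrix κ ι ℝ} {v : ℝ → ι → ℝ}
    {v' : ι → ℝ} (hA : ∀ i j, HasDerivAt (fun t => A t i j) (A' i j) t₀)
    (hv : HasDerivAt v v' t₀) :
    HasDerivAt (fun t => A t *ᵥ v t) (A' *ᵥ v t₀ + A t₀ *ᵥ v') t₀ :=
  hasDerivAt_pi.2 fun i => (hasDerivAt_pi.2 (hA i)).dotProduct hv

theorem HasDerivAt.const_mulVec (A : Matrix κ ι ℝ) {v : ℝ → ι → ℝ} {v' : ι → ℝ}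
    (hv : HasDerivAt v v' t₀) : HasDerivAt (fun t => A *ᵥ v t) (A *ᵥ v') t₀ := by
  refine hasDerivAt_pi.2 fun i => ((hasDerivAt_const t₀ (A i)).dotProduct hv).congr_deriv ?_
  rw [zero_dotProduct, zero_add]
  rfl

theorem HasDerivAt.matrix_mul {A : ℝ → Matrix κ ι ℝ} {B : ℝ → Matrix ι κ ℝ} {A' : Matrix κ ι ℝ}
    {B' : Matrix ι κ ℝ} (hA : ∀ i j, HasDerivAt (fun t => A t i j) (A' i j) t₀)
    (hB : ∀ i j, HasDerivAt (fun t => B t i j) (B' i j) t₀) (i j : κ) :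
    HasDerivAt (fun t => (A t * B t) i j) ((A' * B t₀ + A t₀ * B') i j) t₀ :=
  (hasDerivAt_pi.2 (hA i)).dotProduct (hasDerivAt_pi.2 fun r => hB r j)

end Paths

theorem IsSymm.of_hasDerivAt {ι : Type*} {θ : ℝ → Matrix ι ι ℝ} {θ' : Matrix ι ι ℝ} {t₀ : ℝ}
    (hsymm : ∀ t, (θ t).IsSymm) (hθ : ∀ i j, HasDerivAt (fun t => θ t i j) (θ' i j) t₀) :
    θ'.IsSymm :=
  IsSymm.ext fun i j => (hθ j i).unique (by simpa only [(hsymm _).apply] using hθ i j)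

section Determinant

variable {ι : Type*} [Fintype ι] [DecidableEq ι] {M : ℝ → Matrix ι ι ℝ} {M' : Matrix ι ι ℝ}
  {t₀ : ℝ}

theorem trace_adjugate_mul_eq_sum_det_updateCol (A B : Matrix ι ι ℝ) :
    (adjugate A * B).trace = ∑ i, (A.updateCol i (fun r => B r i)).det := by
  simp_rw [← cramer_apply, cramer_eq_adjugate_mulVec]
  rfl

theorem hasDerivAt_det (h : ∀ i j, HasDerivAt (fun t => M t i j) (M' i j) t₀) :
    HasDerivAt (fun t => (M t).det) ((adjugate (M t₀) * M').trace) t₀ := by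
  have hcol : ∀ i, ((M t₀).updateCol i (fun r => M' r i)).det = ∑ σ : Equiv.Perm ι,
      (Equiv.Perm.sign σ : ℤ) * (M' (σ i) i * ∏ j ∈ Finset.univ.erase i, M t₀ (σ j) j) := by
    intro i
    rw [det_apply']
    refine Finset.sum_congr rfl fun σ _ => ?_
    rw [← Finset.mul_prod_erase _ _ (Finset.mem_univ i), updateCol_self]
    congr 2
    exact Finset.prod_congr rfl fun j hj => by rw [updateCol_ne (Finset.ne_of_mem_erase hj)]
  simp_rw [det_apply']
  refine (HasDerivAt.fun_sum fun σ _ => (HasDerivAt.fun_finsetProd fun i _ => h (σ i) i).const_mul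
    ((Equiv.Perm.sign σ : ℤ) : ℝ)).congr_deriv ?_
  rw [trace_adjugate_mul_eq_sum_det_updateCol]
  simp only [hcol, smul_eq_mul, Finset.mul_sum]
  rw [Finset.sum_comm]
  exact Finset.sum_congr rfl fun σ _ => Finset.sum_congr rfl fun i _ => by ring

theorem hasDerivAt_log_det (h : ∀ i j, HasDerivAt (fun t => M t i j) (M' i j) t₀)
    (hdet : (M t₀).det ≠ 0) :
    HasDerivAt (fun t => Real.log (M t).det) (((M t₀)⁻¹ * M').trace) t₀ := by
  convert (hasDerivAt_det h).log hdet using 1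
  rw [inv_def, Ring.inverse_eq_inv', smul_mul, trace_smul, smul_eq_mul, div_eq_inv_mul]

theorem hasDerivAt_nonsing_inv_apply (h : ∀ i j, HasDerivAt (fun t => M t i j) (M' i j) t₀)
    (hdet : IsUnit (M t₀).det) (i j : ι) :
    HasDerivAt (fun t => (M t)⁻¹ i j) ((-((M t₀)⁻¹ * M' * (M t₀)⁻¹)) i j) t₀ := by
  have hdetM := hasDerivAt_det h
  have hdiff : ∀ p q, DifferentiableAt ℝ (fun t => (M t)⁻¹ p q) t₀ := by
    intro p q
    have hadj : DifferentiableAt ℝ (fun t => adjugate (M t) p q) t₀ := by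
      simp_rw [adjugate_apply]
      refine (hasDerivAt_det (M' := M'.updateRow q 0) fun r s => ?_).differentiableAt
      by_cases hr : r = q
      · subst hr
        simpa using hasDerivAt_const t₀ (Pi.single (M := fun _ => ℝ) p 1 s)
      · simpa [updateRow_ne hr] using h r s
    simp_rw [inv_def, Ring.inverse_eq_inv', Matrix.smul_apply, smul_eq_mul]
    exact (hdetM.differentiableAt.inv hdet.ne_zero).mul hadj
  set B' : Matrix ι ι ℝ := of fun p q => deriv (fun t => (M t)⁻¹ p q) t₀
  have hB : ∀ p q, HasDerivAt (fun t => (M t)⁻¹ p q) (B' p q) t₀ :=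
    fun p q => (hdiff p q).hasDerivAt
  have hunit : ∀ᶠ t in 𝓝 t₀, M t * (M t)⁻¹ = 1 :=
    (hdetM.continuousAt.eventually_ne hdet.ne_zero).mono fun t ht =>
      mul_nonsing_inv _ (isUnit_iff_ne_zero.2 ht)
  have hzero : M' * (M t₀)⁻¹ + M t₀ * B' = 0 := by
    ext r s
    have hconst : (fun _ => (1 : Matrix ι ι ℝ) r s) =ᶠ[𝓝 t₀] fun t => (M t * (M t)⁻¹) r s :=
      hunit.mono fun t ht => by simp only [ht]
    exact ((HasDerivAt.matrix_mul h hB r s).congr_of_eventuallyEq hconst).unique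
      (hasDerivAt_const _ _)
  have hB' : B' = -((M t₀)⁻¹ * M' * (M t₀)⁻¹) := by
    calc B' = (M t₀)⁻¹ * (M t₀ * B') := by rw [← mul_assoc, nonsing_inv_mul _ hdet, one_mul]
      _ = -((M t₀)⁻¹ * M' * (M t₀)⁻¹) := by
        rw [eq_neg_of_add_eq_zero_right hzero, mul_neg, mul_assoc]
  rw [← hB']
  exact hB i j

theorem hasDerivAt_log_det_smul_inv (h : ∀ i j, HasDerivAt (fun t => M t i j) (M' i j) t₀)
    (hdet : IsUnit (M t₀).det) (c : ℝ) (hc : c ≠ 0) :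
    HasDerivAt (fun t => Real.log (c • (M t)⁻¹).det) (-((M t₀)⁻¹ * M').trace) t₀ := by
  set B := (M t₀)⁻¹
  have hB : IsUnit (c • B).det := by
    rw [det_smul]
    exact (isUnit_iff_ne_zero.2 (pow_ne_zero _ hc)).mul (isUnit_nonsing_inv_det _ hdet)
  have hderiv : c • -(B * M' * B) = (c • B) * -(M' * B) := by
    rw [smul_mul, mul_neg, mul_assoc]
  refine (hasDerivAt_log_det (M := fun t => c • (M t)⁻¹) (M' := c • -(B * M' * B))
    (fun i j => (hasDerivAt_nonsing_inv_apply h hdet i j).const_mul c) hB.ne_zero).congr_deriv ?_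
  change ((c • B)⁻¹ * (c • -(B * M' * B))).trace = _
  rw [hderiv, nonsing_inv_mul_cancel_left _ _ hB, trace_neg, trace_mul_comm]

end Determinant

section Gaussian

variable {n : ℕ}

noncomputable def gaussLogPartition (e : Fin n → ℝ) (T : Matrix (Fin n) (Fin n) ℝ) : ℝ :=
  -(1 / 4 : ℝ) * (e ⬝ᵥ T⁻¹ *ᵥ e) + (1 / 2 : ℝ) * Real.log (((-(1 / 2) : ℝ) • T⁻¹).det)
    + ((n : ℝ) / 2) * Real.log (2 * Real.pi)

noncomputable def gaussLogPartitionDeriv (e : Fin n → ℝ) (T : Matrix (Fin n) (Fin n) ℝ)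
    (e' : Fin n → ℝ) (T' : Matrix (Fin n) (Fin n) ℝ) : ℝ :=
  -(1 / 4 : ℝ) * (e' ⬝ᵥ T⁻¹ *ᵥ e + e ⬝ᵥ ((-(T⁻¹ * T' * T⁻¹)) *ᵥ e + T⁻¹ *ᵥ e'))
    - (1 / 2 : ℝ) * (T⁻¹ * T').trace

-- For negative definite `T`, the density of `𝒩(-½ T⁻¹ e, -½ T⁻¹)`.
noncomputable def gaussDensity (e : Fin n → ℝ) (T : Matrix (Fin n) (Fin n) ℝ) (y : Fin n → ℝ) :
    ℝ :=
  Real.exp (e ⬝ᵥ y + y ⬝ᵥ T *ᵥ y - gaussLogPartition e T)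

noncomputable def gaussVelocity (e : Fin n → ℝ) (T : Matrix (Fin n) (Fin n) ℝ)
    (e' : Fin n → ℝ) (T' : Matrix (Fin n) (Fin n) ℝ) (y : Fin n → ℝ) : Fin n → ℝ :=
  (1 / 4 : ℝ) • ((T⁻¹ * T' * T⁻¹) *ᵥ e) - (1 / 2 : ℝ) • (T⁻¹ *ᵥ e')
    - (1 / 2 : ℝ) • ((T⁻¹ * T') *ᵥ y)

theorem contDiff_gaussDensity (e : Fin n → ℝ) (T : Matrix (Fin n) (Fin n) ℝ) {m : WithTop ℕ∞} :
    ContDiff ℝ m (gaussDensity e T) := by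
  unfold gaussDensity
  simp only [dotProduct, mulVec]
  fun_prop

theorem differentiable_gaussDensity (e : Fin n → ℝ) (T : Matrix (Fin n) (Fin n) ℝ) :
    Differentiable ℝ (gaussDensity e T) :=
  (contDiff_gaussDensity e T (m := 1)).differentiable one_ne_zero

theorem differentiable_gaussVelocity_apply (e e' : Fin n → ℝ) (T T' : Matrix (Fin n) (Fin n) ℝ)
    (i : Fin n) : Differentiable ℝ (fun y => gaussVelocity e T e' T' y i) := by
  unfold gaussVelocity
  simp only [Pi.sub_apply, Pi.smul_apply, mulVec, dotProduct]
  fun_prop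

section TimeDerivative

variable {η : ℝ → Fin n → ℝ} {θ : ℝ → Matrix (Fin n) (Fin n) ℝ} {η' : Fin n → ℝ}
  {θ' : Matrix (Fin n) (Fin n) ℝ} {t₀ : ℝ}

theorem hasDerivAt_gaussLogPartition (hη : HasDerivAt η η' t₀)
    (hθ : ∀ i j, HasDerivAt (fun t => θ t i j) (θ' i j) t₀) (hdet : IsUnit (θ t₀).det) :
    HasDerivAt (fun t => gaussLogPartition (η t) (θ t))
      (gaussLogPartitionDeriv (η t₀) (θ t₀) η' θ') t₀ := by
  have hquad := hη.dotProduct (HasDerivAt.mulVec (hasDerivAt_nonsing_inv_apply hθ hdet) hη)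
  have hlog := hasDerivAt_log_det_smul_inv hθ hdet (-(1 / 2)) (by norm_num)
  refine (((hquad.const_mul _).add (hlog.const_mul _)).add_const _).congr_deriv ?_
  rw [gaussLogPartitionDeriv]
  ring

theorem hasDerivAt_gaussDensity_time (hη : HasDerivAt η η' t₀)
    (hθ : ∀ i j, HasDerivAt (fun t => θ t i j) (θ' i j) t₀) (hdet : IsUnit (θ t₀).det)
    (x : Fin n → ℝ) :
    HasDerivAt (fun t => gaussDensity (η t) (θ t) x) (gaussDensity (η t₀) (θ t₀) x *
      (η' ⬝ᵥ x + x ⬝ᵥ θ' *ᵥ x - gaussLogPartitionDeriv (η t₀) (θ t₀) η' θ')) t₀ := by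
  have hexp := (((hη.dotProduct (hasDerivAt_const t₀ x)).add
    ((hasDerivAt_const t₀ x).dotProduct (HasDerivAt.mulVec hθ (hasDerivAt_const t₀ x)))).sub
    (hasDerivAt_gaussLogPartition hη hθ hdet)).exp
  refine hexp.congr_deriv ?_
  simp [gaussDensity]

end TimeDerivative

section SpaceDerivative

variable {e e' : Fin n → ℝ} {T T' : Matrix (Fin n) (Fin n) ℝ}

theorem hasDerivAt_gaussDensity_update (hT : T.IsSymm) (y : Fin n → ℝ) (i : Fin n) :
    HasDerivAt (fun ξ => gaussDensity e T (Function.update y i ξ))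
      (gaussDensity e T y * (e i + 2 * (T *ᵥ y) i)) (y i) := by
  have hu := hasDerivAt_update y i (y i)
  have hexp := ((((hasDerivAt_const (y i) e).dotProduct hu).fun_add
    (hu.dotProduct (hu.const_mulVec T))).sub_const (gaussLogPartition e T)).exp
  simp only [Function.update_eq_self] at hexp
  refine hexp.congr_deriv ?_
  have hsymm : y ⬝ᵥ T *ᵥ Pi.single i 1 = (T *ᵥ y) i := by
    rw [dotProduct_mulVec, ← mulVec_transpose, hT.eq, dotProduct_single, mul_one]
  simp only [gaussDensity, zero_dotProduct, zero_add, dotProduct_single,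
    single_dotProduct, hsymm]
  ring

theorem hasDerivAt_gaussVelocity_update (x : Fin n → ℝ) (i : Fin n) :
    HasDerivAt (fun ξ => gaussVelocity e T e' T' (Function.update x i ξ) i)
      (-(1 / 2) * (T⁻¹ * T') i i) (x i) := by
  have hu := hasDerivAt_update x i (x i)
  have hv := ((hasDerivAt_const (x i) ((1 / 4 : ℝ) • ((T⁻¹ * T' * T⁻¹) *ᵥ e)
    - (1 / 2 : ℝ) • (T⁻¹ *ᵥ e'))).sub ((hu.const_mulVec (T⁻¹ * T')).const_smul (1 / 2 : ℝ)))
  refine (hasDerivAt_pi.1 hv i).congr_deriv ?_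
  simp

theorem sum_pderivCoord_gaussDensity_mul_gaussVelocity (hT : T.IsSymm) (x : Fin n → ℝ) :
    ∑ i, pderivCoord i (fun y => gaussDensity e T y * gaussVelocity e T e' T' y i) x =
      gaussDensity e T x * ((e + (2 : ℝ) • (T *ᵥ x)) ⬝ᵥ gaussVelocity e T e' T' x
        - (1 / 2) * (T⁻¹ * T').trace) := by
  have hterm : ∀ i, pderivCoord i (fun y => gaussDensity e T y * gaussVelocity e T e' T' y i) x
      = gaussDensity e T x * ((e i + 2 * (T *ᵥ x) i) * gaussVelocity e T e' T' x i
        - (1 / 2) * (T⁻¹ * T') i i) := by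
    intro i
    have h := (hasDerivAt_gaussDensity_update (e := e) hT x i).fun_mul
      (hasDerivAt_gaussVelocity_update (e := e) (e' := e') (T := T) (T' := T') x i)
    rw [Function.update_eq_self] at h
    rw [pderivCoord, h.deriv]
    ring
  simp only [hterm, ← Finset.mul_sum, Finset.sum_sub_distrib, trace,
    dotProduct, diag_apply, Pi.add_apply, Pi.smul_apply, smul_eq_mul]

end SpaceDerivative

theorem sub_gaussLogPartitionDeriv_eq_neg_transport {e e' : Fin n → ℝ}
    {T T' : Matrix (Fin n) (Fin n) ℝ} (hT : T.IsSymm) (hT' : T'.IsSymm) (hdet : IsUnit T.det)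
    (x : Fin n → ℝ) :
    e' ⬝ᵥ x + x ⬝ᵥ T' *ᵥ x - gaussLogPartitionDeriv e T e' T' =
      -((e + (2 : ℝ) • (T *ᵥ x)) ⬝ᵥ gaussVelocity e T e' T' x - (1 / 2) * (T⁻¹ * T').trace) := by
  have hB : (T⁻¹)ᵀ = T⁻¹ := by rw [transpose_nonsing_inv, hT.eq]
  have hTx : ∀ (M : Matrix (Fin n) (Fin n) ℝ) v, (T *ᵥ x) ⬝ᵥ (T⁻¹ * M) *ᵥ v = x ⬝ᵥ M *ᵥ v := by
    intro M v
    rw [dotProduct_comm, ← dotProduct_transpose_mulVec, hT.eq, mulVec_mulVec, ← mul_assoc,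
      mul_nonsing_inv _ hdet, one_mul]
  have h₁ : (T *ᵥ x) ⬝ᵥ (T⁻¹ * T' * T⁻¹) *ᵥ e = x ⬝ᵥ (T' * T⁻¹) *ᵥ e := by rw [mul_assoc, hTx]
  have h₂ : (T *ᵥ x) ⬝ᵥ T⁻¹ *ᵥ e' = x ⬝ᵥ e' := by
    rw [← mul_one T⁻¹, hTx, one_mulVec]
  have h₃ : e ⬝ᵥ (T⁻¹ * T') *ᵥ x = x ⬝ᵥ (T' * T⁻¹) *ᵥ e := by
    rw [← dotProduct_transpose_mulVec, transpose_mul, hB, hT'.eq]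
  have h₄ : e' ⬝ᵥ T⁻¹ *ᵥ e = e ⬝ᵥ T⁻¹ *ᵥ e' := by rw [← dotProduct_transpose_mulVec, hB]
  simp only [gaussLogPartitionDeriv, gaussVelocity, add_dotProduct, smul_dotProduct,
    dotProduct_sub, dotProduct_smul, dotProduct_add, neg_mulVec, dotProduct_neg, hTx, h₁, h₂, h₃,
    h₄, smul_eq_mul]
  rw [dotProduct_comm e' x]
  ring

theorem hasDerivAt_gaussDensity_eq_neg_sum_pderivCoord {η : ℝ → Fin n → ℝ}
    {θ : ℝ → Matrix (Fin n) (Fin n) ℝ} {η' : Fin n → ℝ} {θ' : Matrix (Fin n) (Fin n) ℝ} {t₀ : ℝ}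
    (hη : HasDerivAt η η' t₀) (hθ : ∀ i j, HasDerivAt (fun t => θ t i j) (θ' i j) t₀)
    (hsymm : (θ t₀).IsSymm) (hsymm' : θ'.IsSymm) (hdet : IsUnit (θ t₀).det) (x : Fin n → ℝ) :
    HasDerivAt (fun t => gaussDensity (η t) (θ t) x) (-∑ i, pderivCoord i
      (fun y => gaussDensity (η t₀) (θ t₀) y * gaussVelocity (η t₀) (θ t₀) η' θ' y i) x) t₀ := by
  refine (hasDerivAt_gaussDensity_time hη hθ hdet x).congr_deriv ?_
  rw [sum_pderivCoord_gaussDensity_mul_gaussVelocity hsymm,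
    sub_gaussLogPartitionDeriv_eq_neg_transport hsymm hsymm' hdet]
  ring

end Gaussian

section FokkerPlanck

variable {n : ℕ}

theorem neg_sum_pderivCoord_flux_eq {F : Fin n → Fin n → (Fin n → ℝ) → ℝ}
    {J g : Fin n → (Fin n → ℝ) → ℝ} {x : Fin n → ℝ} (hF : ∀ i j, ContDiff ℝ 2 (F i j))
    (hg : ∀ i, DifferentiableAt ℝ (g i) x)
    (hJ : ∀ i y, J i y = 1 / 2 * ∑ j, pderivCoord j (F i j) y + g i y) :
    -∑ i, pderivCoord i (J i) x + 1 / 2 * ∑ i, ∑ j, pderivCoord i (pderivCoord j (F i j)) x =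
      -∑ i, pderivCoord i (g i) x := by
  have hdiv : ∀ i, pderivCoord i (J i) x =
      1 / 2 * ∑ j, pderivCoord i (pderivCoord j (F i j)) x + pderivCoord i (g i) x := by
    intro i
    have hD : ∀ j ∈ Finset.univ, DifferentiableAt ℝ (pderivCoord j (F i j)) x :=
      fun j _ => (hF i j).differentiable_pderivCoord j x
    rw [show J i = _ from funext (hJ i),
      pderivCoord_add i ((DifferentiableAt.fun_sum hD).const_mul _) (hg i),
      pderivCoord_const_mul i _ (DifferentiableAt.fun_sum hD), pderivCoord_sum _ i hD]
  simp only [hdiv, Finset.sum_add_distrib, ← Finset.mul_sum]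
  ring

theorem drift_mul_eq_half_sum_pderivCoord_add {a : (Fin n → ℝ) → Matrix (Fin n) (Fin n) ℝ}
    {p : (Fin n → ℝ) → ℝ} {y : Fin n → ℝ} (g : Fin n → ℝ)
    (ha : ∀ i j, DifferentiableAt ℝ (fun z => a z i j) y) (hp : DifferentiableAt ℝ p y)
    (hpy : p y ≠ 0) (i : Fin n) :
    ((1 / 2 : ℝ) • (fun i => ∑ j, pderivCoord j (fun z => a z i j) y)
      + (1 / p y) • (g + (1 / 2 : ℝ) • (a y *ᵥ fun j => pderivCoord j p y))) i * p y
      = 1 / 2 * ∑ j, pderivCoord j (fun z => a z i j * p z) y + g i := by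
  have hprod : ∑ j, pderivCoord j (fun z => a z i j * p z) y =
      (∑ j, pderivCoord j (fun z => a z i j) y) * p y + (a y *ᵥ fun j => pderivCoord j p y) i := by
    simp only [pderivCoord_mul _ (ha i _) hp, Finset.sum_add_distrib, Finset.sum_mul]
    rfl
  rw [hprod]
  simp only [Pi.add_apply, Pi.smul_apply, smul_eq_mul]
  field_simp
  ring

end FokkerPlanck

section GaussianMixture

variable {n k : ℕ} {ν : Fin k → ℝ}

theorem sum_mul_pos_of_sum_eq_one {ι : Type*} [Fintype ι] {ν f : ι → ℝ} (hν0 : ∀ ℓ, 0 ≤ ν ℓ)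
    (hν1 : ∑ ℓ, ν ℓ = 1) (hf : ∀ ℓ, 0 < f ℓ) : 0 < ∑ ℓ, ν ℓ * f ℓ := by
  obtain ⟨ℓ, hℓ⟩ : ∃ ℓ, 0 < ν ℓ := by
    by_contra! h
    linarith [Finset.sum_nonpos fun ℓ (_ : ℓ ∈ Finset.univ) => h ℓ]
  exact Finset.sum_pos' (fun ℓ _ => mul_nonneg (hν0 ℓ) (hf ℓ).le)
    ⟨ℓ, Finset.mem_univ _, mul_pos hℓ (hf ℓ)⟩

theorem pderivCoord_sum_mul_gaussDensity {e : Fin k → Fin n → ℝ}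
    {T : Fin k → Matrix (Fin n) (Fin n) ℝ} (hT : ∀ ℓ, (T ℓ).IsSymm) (y : Fin n → ℝ) (j : Fin n) :
    pderivCoord j (fun z => ∑ ℓ, ν ℓ * gaussDensity (e ℓ) (T ℓ) z) y =
      ∑ ℓ, ν ℓ * (gaussDensity (e ℓ) (T ℓ) y * (e ℓ j + 2 * (T ℓ *ᵥ y) j)) := by
  rw [pderivCoord_sum _ j fun ℓ _ => (differentiable_gaussDensity _ _ y).const_mul _]
  refine Finset.sum_congr rfl fun ℓ _ => ?_
  rw [pderivCoord_const_mul _ _ (differentiable_gaussDensity _ _ y), pderivCoord,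
    (hasDerivAt_gaussDensity_update (hT ℓ) y j).deriv]

theorem sum_mul_gaussDensity_flux_eq {e : Fin k → Fin n → ℝ}
    {T : Fin k → Matrix (Fin n) (Fin n) ℝ} {a : (Fin n → ℝ) → Matrix (Fin n) (Fin n) ℝ}
    {c : Fin k → (Fin n → ℝ) → Fin n → ℝ} {u : (Fin n → ℝ) → Fin n → ℝ}
    (hT : ∀ ℓ, (T ℓ).IsSymm) (hν0 : ∀ ℓ, 0 ≤ ν ℓ) (hν1 : ∑ ℓ, ν ℓ = 1)
    (ha : ∀ i j, Differentiable ℝ (fun y => a y i j))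
    (hu : ∀ y, u y = (1 / 2 : ℝ) • (fun i => ∑ j, pderivCoord j (fun z => a z i j) y)
      + (1 / ∑ ℓ, ν ℓ * gaussDensity (e ℓ) (T ℓ) y) • ∑ ℓ, (ν ℓ * gaussDensity (e ℓ) (T ℓ) y) •
        (c ℓ y + a y *ᵥ ((1 / 2 : ℝ) • e ℓ + T ℓ *ᵥ y)))
    (i : Fin n) (y : Fin n → ℝ) :
    u y i * ∑ ℓ, ν ℓ * gaussDensity (e ℓ) (T ℓ) y =
      1 / 2 * ∑ j, pderivCoord j (fun z => a z i j * ∑ ℓ, ν ℓ * gaussDensity (e ℓ) (T ℓ) z) y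
        + ∑ ℓ, ν ℓ * (gaussDensity (e ℓ) (T ℓ) y * c ℓ y i) := by
  have hsum : ∑ ℓ, (ν ℓ * gaussDensity (e ℓ) (T ℓ) y) •
      (c ℓ y + a y *ᵥ ((1 / 2 : ℝ) • e ℓ + T ℓ *ᵥ y)) =
      (fun i => ∑ ℓ, ν ℓ * (gaussDensity (e ℓ) (T ℓ) y * c ℓ y i)) + (1 / 2 : ℝ) •
        (a y *ᵥ fun j => pderivCoord j (fun z => ∑ ℓ, ν ℓ * gaussDensity (e ℓ) (T ℓ) z) y) := by
    simp_rw [pderivCoord_sum_mul_gaussDensity hT, smul_add, Finset.sum_add_distrib,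
      ← mulVec_smul, ← mulVec_sum]
    congr 2
    · ext i
      simp [Finset.sum_apply, mul_assoc]
    · ext j
      simp only [Finset.sum_apply, Pi.smul_apply, Pi.add_apply, smul_eq_mul, Finset.mul_sum]
      exact Finset.sum_congr rfl fun ℓ _ => by ring
  rw [hu, hsum]
  exact drift_mul_eq_half_sum_pderivCoord_add _ (fun i j => ha i j y)
    (Differentiable.fun_sum (fun ℓ _ => (differentiable_gaussDensity _ _).const_mul _) y)
    (sum_mul_pos_of_sum_eq_one hν0 hν1 fun ℓ => Real.exp_pos _).ne' i

theorem hasDerivAt_sum_mul_gaussDensity {η : Fin k → ℝ → Fin n → ℝ}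
    {θ : Fin k → ℝ → Matrix (Fin n) (Fin n) ℝ} {η' : Fin k → Fin n → ℝ}
    {θ' : Fin k → Matrix (Fin n) (Fin n) ℝ} {t₀ : ℝ} (hη : ∀ ℓ, HasDerivAt (η ℓ) (η' ℓ) t₀)
    (hθ : ∀ ℓ i j, HasDerivAt (fun t => θ ℓ t i j) (θ' ℓ i j) t₀)
    (hsymm : ∀ ℓ, (θ ℓ t₀).IsSymm) (hsymm' : ∀ ℓ, (θ' ℓ).IsSymm)
    (hdet : ∀ ℓ, IsUnit (θ ℓ t₀).det) (x : Fin n → ℝ) :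
    HasDerivAt (fun t => ∑ ℓ, ν ℓ * gaussDensity (η ℓ t) (θ ℓ t) x) (-∑ i, pderivCoord i
      (fun y => ∑ ℓ, ν ℓ * (gaussDensity (η ℓ t₀) (θ ℓ t₀) y *
        gaussVelocity (η ℓ t₀) (θ ℓ t₀) (η' ℓ) (θ' ℓ) y i)) x) t₀ := by
  refine (HasDerivAt.fun_sum fun ℓ _ => (hasDerivAt_gaussDensity_eq_neg_sum_pderivCoord (hη ℓ)
    (hθ ℓ) (hsymm ℓ) (hsymm' ℓ) (hdet ℓ) x).const_mul (ν ℓ)).congr_deriv ?_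
  have hd : ∀ ℓ i, DifferentiableAt ℝ (fun y => gaussDensity (η ℓ t₀) (θ ℓ t₀) y *
      gaussVelocity (η ℓ t₀) (θ ℓ t₀) (η' ℓ) (θ' ℓ) y i) x := fun ℓ i =>
    ((differentiable_gaussDensity _ _).mul (differentiable_gaussVelocity_apply _ _ _ _ i)) x
  simp only [pderivCoord_sum Finset.univ _ fun ℓ _ => (hd ℓ _).const_mul (ν ℓ),
    pderivCoord_const_mul _ _ (hd _ _), mul_neg, Finset.mul_sum, Finset.sum_neg_distrib]
  rw [Finset.sum_comm]

end GaussianMixture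

theorem gaussian_mixture_fokker_planck_general {n k : ℕ} (t₀ : ℝ)
    (ν : Fin k → ℝ) (hν0 : ∀ ℓ, 0 ≤ ν ℓ) (hν1 : ∑ ℓ, ν ℓ = 1)
    (a : (Fin n → ℝ) → Matrix (Fin n) (Fin n) ℝ)
    (ha : ∀ i j, ContDiff ℝ 2 (fun y => a y i j))
    (η : Fin k → ℝ → (Fin n → ℝ)) (θ : Fin k → ℝ → Matrix (Fin n) (Fin n) ℝ)
    (hθsymm : ∀ ℓ t, (θ ℓ t).IsSymm) (hθneg : ∀ ℓ t, (-(θ ℓ t)).PosDef)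
    (ηdot : Fin k → (Fin n → ℝ)) (θdot : Fin k → Matrix (Fin n) (Fin n) ℝ)
    (hη : ∀ ℓ, HasDerivAt (η ℓ) (ηdot ℓ) t₀)
    (hθd : ∀ ℓ i j, HasDerivAt (fun t => θ ℓ t i j) (θdot ℓ i j) t₀)
    (ψ : (Fin n → ℝ) → Matrix (Fin n) (Fin n) ℝ → ℝ)
    (hψ : ∀ (e : Fin n → ℝ) (T : Matrix (Fin n) (Fin n) ℝ), ψ e T =
      -(1 / 4 : ℝ) * (e ⬝ᵥ T⁻¹.mulVec e)
        + (1 / 2 : ℝ) * Real.log (((-(1 / 2) : ℝ) • T⁻¹).det)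
        + ((n : ℝ) / 2) * Real.log (2 * Real.pi))
    (pc : Fin k → (Fin n → ℝ) → ℝ → ℝ)
    (hpc : ∀ ℓ y t, pc ℓ y t =
      Real.exp (η ℓ t ⬝ᵥ y + y ⬝ᵥ (θ ℓ t).mulVec y - ψ (η ℓ t) (θ ℓ t)))
    (P : (Fin n → ℝ) → ℝ → ℝ)
    (hP : ∀ y t, P y t = ∑ ℓ, ν ℓ * pc ℓ y t)
    (u : (Fin n → ℝ) → (Fin n → ℝ))
    (hu : ∀ y, u y =
      (1 / 2 : ℝ) • (fun i => ∑ j, pderivCoord j (fun z => a z i j) y)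
        + (1 / P y t₀) •
            ∑ ℓ, (ν ℓ * pc ℓ y t₀) •
              ((1 / 4 : ℝ) • ((θ ℓ t₀)⁻¹ * θdot ℓ * (θ ℓ t₀)⁻¹).mulVec (η ℓ t₀)
                - (1 / 2 : ℝ) • (θ ℓ t₀)⁻¹.mulVec (ηdot ℓ)
                - (1 / 2 : ℝ) • ((θ ℓ t₀)⁻¹ * θdot ℓ).mulVec y
                + (a y).mulVec ((1 / 2 : ℝ) • η ℓ t₀ + (θ ℓ t₀).mulVec y)))
    (x : Fin n → ℝ) :
    HasDerivAt (fun t => P x t)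
      (-∑ i, pderivCoord i (fun y => u y i * P y t₀) x
        + (1 / 2 : ℝ) * ∑ i, ∑ j,
            pderivCoord i (fun y => pderivCoord j (fun z => a z i j * P z t₀) y) x)
      t₀ := by
  obtain rfl : ψ = fun e T => gaussLogPartition e T := funext₂ hψ
  obtain rfl : pc = fun ℓ y t => gaussDensity (η ℓ t) (θ ℓ t) y := funext fun ℓ => funext₂ (hpc ℓ)
  obtain rfl : P = fun y t => ∑ ℓ, ν ℓ * gaussDensity (η ℓ t) (θ ℓ t) y := funext₂ hP
  beta_reduce at hu ⊢
  have hdet : ∀ ℓ, IsUnit (θ ℓ t₀).det := fun ℓ =>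
    (isUnit_iff_isUnit_det _).1 (by simpa using (hθneg ℓ t₀).isUnit.neg)
  have hsymm' : ∀ ℓ, (θdot ℓ).IsSymm := fun ℓ => IsSymm.of_hasDerivAt (hθsymm ℓ) (hθd ℓ)
  have hflux := sum_mul_gaussDensity_flux_eq (e := fun ℓ => η ℓ t₀) (T := fun ℓ => θ ℓ t₀)
    (c := fun ℓ => gaussVelocity (η ℓ t₀) (θ ℓ t₀) (ηdot ℓ) (θdot ℓ)) (fun ℓ => hθsymm ℓ t₀)
    hν0 hν1 (fun i j => (ha i j).differentiable two_ne_zero) hu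
  rw [neg_sum_pderivCoord_flux_eq (fun i j => (ha i j).mul (ContDiff.sum fun ℓ _ =>
      contDiff_const.mul (contDiff_gaussDensity _ _)))
    (fun i => (Differentiable.fun_sum fun ℓ _ => ((differentiable_gaussDensity _ _).mul
      (differentiable_gaussVelocity_apply _ _ _ _ i)).const_mul _) x) hflux]
  exact hasDerivAt_sum_mul_gaussDensity hη hθd (fun ℓ => hθsymm ℓ t₀) hsymm' hdet x

/-- Proposition 5 combined with Theorem 4: the Gaussian-mixture density
`p(y,t) = ∑_ℓ ν_ℓ exp((η^ℓ_t)ᵀy + yᵀθ^ℓ_t y − ψ(η^ℓ_t,θ^ℓ_t))` satisfies the Kolmogorov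
forward (Fokker–Planck) equation at `(x,t₀)` with the closed-form drift
`u(y) = (1/2)div a(y) + (1/p)∑_ℓ ν_ℓ p_ℓ [(1/4)θ⁻¹θ̇θ⁻¹η − (1/2)θ⁻¹η̇ − (1/2)θ⁻¹θ̇y
  + a(y)((1/2)η + θy)]`. -/
theorem gaussian_mixture_fokker_planck {n k : ℕ} (hn : 1 ≤ n) (hk : 1 ≤ k) (t₀ : ℝ)
    (ν : Fin k → ℝ) (hν0 : ∀ ℓ, 0 ≤ ν ℓ) (hν1 : ∑ ℓ, ν ℓ = 1)
    (a : (Fin n → ℝ) → Matrix (Fin n) (Fin n) ℝ)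
    (ha : ∀ i j, ContDiff ℝ 2 (fun y => a y i j))
    (η : Fin k → ℝ → (Fin n → ℝ)) (θ : Fin k → ℝ → Matrix (Fin n) (Fin n) ℝ)
    (hθsymm : ∀ ℓ t, (θ ℓ t).IsSymm) (hθneg : ∀ ℓ t, (-(θ ℓ t)).PosDef)
    (ηdot : Fin k → (Fin n → ℝ)) (θdot : Fin k → Matrix (Fin n) (Fin n) ℝ)
    (hη : ∀ ℓ, HasDerivAt (η ℓ) (ηdot ℓ) t₀)
    (hθd : ∀ ℓ i j, HasDerivAt (fun t => θ ℓ t i j) (θdot ℓ i j) t₀)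
    (ψ : (Fin n → ℝ) → Matrix (Fin n) (Fin n) ℝ → ℝ)
    (hψ : ∀ (e : Fin n → ℝ) (T : Matrix (Fin n) (Fin n) ℝ), ψ e T =
      -(1 / 4 : ℝ) * (e ⬝ᵥ T⁻¹.mulVec e)
        + (1 / 2 : ℝ) * Real.log (((-(1 / 2) : ℝ) • T⁻¹).det)
        + ((n : ℝ) / 2) * Real.log (2 * Real.pi))
    (pc : Fin k → (Fin n → ℝ) → ℝ → ℝ)
    (hpc : ∀ ℓ y t, pc ℓ y t =
      Real.exp (η ℓ t ⬝ᵥ y + y ⬝ᵥ (θ ℓ t).mulVec y - ψ (η ℓ t) (θ ℓ t)))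
    (P : (Fin n → ℝ) → ℝ → ℝ)
    (hP : ∀ y t, P y t = ∑ ℓ, ν ℓ * pc ℓ y t)
    (u : (Fin n → ℝ) → (Fin n → ℝ))
    (hu : ∀ y, u y =
      (1 / 2 : ℝ) • (fun i => ∑ j, pderivCoord j (fun z => a z i j) y)
        + (1 / P y t₀) •
            ∑ ℓ, (ν ℓ * pc ℓ y t₀) •
              ((1 / 4 : ℝ) • ((θ ℓ t₀)⁻¹ * θdot ℓ * (θ ℓ t₀)⁻¹).mulVec (η ℓ t₀)
                - (1 / 2 : ℝ) • (θ ℓ t₀)⁻¹.mulVec (ηdot ℓ)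
                - (1 / 2 : ℝ) • ((θ ℓ t₀)⁻¹ * θdot ℓ).mulVec y
                + (a y).mulVec ((1 / 2 : ℝ) • η ℓ t₀ + (θ ℓ t₀).mulVec y)))
    (x : Fin n → ℝ) :
    HasDerivAt (fun t => P x t)
      (-∑ i, pderivCoord i (fun y => u y i * P y t₀) x
        + (1 / 2 : ℝ) * ∑ i, ∑ j,
            pderivCoord i (fun y => pderivCoord j (fun z => a z i j * P z t₀) y) x)
      t₀ :=
  gaussian_mixture_fokker_planck_general t₀ ν hν0 hν1 a ha η θ hθsymm hθneg ηdot θdot hη hθd ψ hψ pc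
    hpc P hP u hu x
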